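/- arXiv:2602.22146 — 5 statements merged into one kernel-verified Lean document; each statement's English description precedes it below -/
import Mathlib

section
/- Three-point inequality with KL regularization (Lemma, three-point-KL). Let Y be a finite nonempty set, π_old and π_ref probability vectors on Y, and let Π_eff be the set of probability vectors on Y whose support is contained in supp(π_old) ∩ supp(π_ref). Let g : Y → ℝ and η > 0, β > 0, and suppose π_new maximizes π ↦ ⟨g, π⟩ − η·KL(π‖π_old) − β·KL(π‖π_ref) over Π_eff. Then for every π' ∈ Π_eff: ⟨g, π_new − π'⟩ − β·( KL(π_new‖π_ref) − KL(π'‖π_ref) ) ≥ η·( −KL(π'‖π_old) + KL(π'‖π_new) + KL(π_new‖π_old) ) + β·KL(π'‖π_new). -/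
/-!
On vectors supported in the common support `S` of `πold` and `πref` with total mass one, the
objective `⟨g, π⟩ - η KL(π‖πold) - β KL(π‖πref)` equals `(η + β) (log Z - KL(π‖q))`, where `q` is the
Gibbs distribution on `S` proportional to `exp ((g + η log πold + β log πref) / (η + β))` and `Z`
its normalizer. By the equality case of Gibbs' inequality the maximizer `πnew` is therefore `q`,
and then the difference of objective values at `πnew` and `π'` is exactly `(η + β) KL(π'‖πnew)`:
the three-point inequality holds with equality.
-/

open BigOperators

/-- Discrete Kullback–Leibler divergence `KL(p‖q) = Σ_y p(y)·log(p(y)/q(y))`,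
with the convention `0·log 0 = 0` (automatic since `Real.log 0 = 0`). -/
noncomputable def KLdiv {Y : Type*} [Fintype Y] (p q : Y → ℝ) : ℝ :=
  ∑ y, p y * Real.log (p y / q y)

/-- `p` is a probability vector on the finite set `Y`. -/
def IsProbVec {Y : Type*} [Fintype Y] (p : Y → ℝ) : Prop :=
  (∀ y, 0 ≤ p y) ∧ ∑ y, p y = 1

section KullbackLeibler

open Real InformationTheory Finset

variable {Y : Type*} [Fintype Y]

lemma KLdiv_eq_sum_mul_sub_log {p q : Y → ℝ} (hpq : ∀ y, p y ≠ 0 → q y ≠ 0) :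
    KLdiv p q = ∑ y, p y * (log (p y) - log (q y)) := by
  refine sum_congr rfl fun y _ => ?_
  rcases eq_or_ne (p y) 0 with hp | hp
  · simp [hp]
  · rw [log_div hp (hpq y hp)]

lemma KLdiv_self (p : Y → ℝ) : KLdiv p p = 0 :=
  sum_eq_zero fun y _ => by
    rcases eq_or_ne (p y) 0 with hp | hp
    · simp [hp]
    · simp [div_self hp]

lemma KLdiv_add_sum_sub_eq_sum_mul_klFun {p q : Y → ℝ} (hpq : ∀ y, q y = 0 → p y = 0) :
    KLdiv p q + ∑ y, (q y - p y) = ∑ y, q y * klFun (p y / q y) := by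
  rw [KLdiv, ← sum_add_distrib]
  refine sum_congr rfl fun y _ => ?_
  rcases eq_or_ne (q y) 0 with hq | hq
  · simp [hq, hpq y hq]
  · rw [klFun_apply]
    field_simp
    ring

lemma eq_of_KLdiv_nonpos {p q : Y → ℝ} (hp : ∀ y, 0 ≤ p y) (hq : ∀ y, 0 ≤ q y)
    (hsum : ∑ y, p y = ∑ y, q y) (hpq : ∀ y, q y = 0 → p y = 0) (hKL : KLdiv p q ≤ 0) :
    p = q := by
  have hterm : ∀ y, 0 ≤ q y * klFun (p y / q y) := fun y =>
    mul_nonneg (hq y) (klFun_nonneg (div_nonneg (hp y) (hq y)))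
  have hzero : ∑ y, q y * klFun (p y / q y) = 0 := by
    refine le_antisymm ?_ (sum_nonneg fun y _ => hterm y)
    rw [← KLdiv_add_sum_sub_eq_sum_mul_klFun hpq, sum_sub_distrib, hsum]
    linarith
  funext y
  rcases eq_or_ne (q y) 0 with hqy | hqy
  · rw [hqy, hpq y hqy]
  · have hy := (sum_eq_zero_iff_of_nonneg fun y _ => hterm y).1 hzero y (mem_univ y)
    rw [mul_eq_zero, or_iff_right hqy, klFun_eq_zero_iff (div_nonneg (hp y) (hq y)),
      div_eq_one_iff_eq hqy] at hy
    exact hy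

end KullbackLeibler

section Gibbs

open Real Finset

variable {Y : Type*} (S : Finset Y) (h : Y → ℝ)

noncomputable def gibbs : Y → ℝ :=
  (S : Set Y).indicator fun y => exp (h y) / ∑ z ∈ S, exp (h z)

lemma gibbs_nonneg (y : Y) : 0 ≤ gibbs S h y :=
  Set.indicator_nonneg (fun _ _ => by positivity) y

lemma gibbs_ne_zero_iff {y : Y} : gibbs S h y ≠ 0 ↔ y ∈ S := by
  refine ⟨fun hne => by_contra fun hy => hne (Set.indicator_of_notMem (by simpa using hy) _),
    fun hy => ?_⟩
  have hZ : 0 < ∑ z ∈ S, exp (h z) := sum_pos (fun z _ => exp_pos _) ⟨y, hy⟩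
  rw [gibbs, Set.indicator_of_mem (by simpa using hy)]
  positivity

lemma sum_gibbs [Fintype Y] (hS : S.Nonempty) : ∑ y, gibbs S h y = 1 := by
  rw [gibbs, sum_indicator_subset _ (subset_univ S), ← sum_div]
  exact div_self (sum_pos (fun z _ => exp_pos _) hS).ne'

lemma log_gibbs {y : Y} (hy : y ∈ S) :
    log (gibbs S h y) = h y - log (∑ z ∈ S, exp (h z)) := by
  have hZ : 0 < ∑ z ∈ S, exp (h z) := sum_pos (fun z _ => exp_pos _) ⟨y, hy⟩
  rw [gibbs, Set.indicator_of_mem (by simpa using hy), log_div (exp_pos _).ne' hZ.ne', log_exp]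

lemma KLdiv_gibbs [Fintype Y] {p : Y → ℝ} (hp : ∀ y ∉ S, p y = 0) :
    KLdiv p (gibbs S h) =
      ∑ y, p y * (log (p y) - h y) + log (∑ z ∈ S, exp (h z)) * ∑ y, p y := by
  have hsupp : ∀ y, p y ≠ 0 → y ∈ S := fun y hy => by_contra fun hS => hy (hp y hS)
  rw [KLdiv_eq_sum_mul_sub_log fun y hy => (gibbs_ne_zero_iff S h).2 (hsupp y hy), mul_sum,
    ← sum_add_distrib]
  refine sum_congr rfl fun y _ => ?_
  rcases eq_or_ne (p y) 0 with hy | hy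
  · simp [hy]
  · rw [log_gibbs S h (hsupp y hy)]
    ring

end Gibbs

section RegularizedObjective

open Real Finset

variable {Y : Type*} [Fintype Y] (g a b : Y → ℝ) (η β : ℝ)

noncomputable def regObjective (p : Y → ℝ) : ℝ :=
  ∑ y, g y * p y - η * KLdiv p a - β * KLdiv p b

noncomputable def regMaximizer : Y → ℝ :=
  gibbs {y | a y ≠ 0 ∧ b y ≠ 0} fun y => (g y + η * log (a y) + β * log (b y)) / (η + β)

variable {g a b η β}

lemma regObjective_sub_regObjective (hc : η + β ≠ 0) {p p' : Y → ℝ}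
    (hp : ∀ y, a y = 0 ∨ b y = 0 → p y = 0) (hp' : ∀ y, a y = 0 ∨ b y = 0 → p' y = 0)
    (hsum : ∑ y, p y = ∑ y, p' y) :
    regObjective g a b η β p - regObjective g a b η β p' =
      (η + β) * (KLdiv p' (regMaximizer g a b η β) - KLdiv p (regMaximizer g a b η β)) := by
  set S : Finset Y := {y | a y ≠ 0 ∧ b y ≠ 0}
  set h : Y → ℝ := fun y => (g y + η * log (a y) + β * log (b y)) / (η + β)
  have hS : ∀ {p : Y → ℝ}, (∀ y, a y = 0 ∨ b y = 0 → p y = 0) → ∀ y ∉ S, p y = 0 :=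
    fun hp y hy => hp y (by simpa [S, or_iff_not_and_not] using hy)
  have hF : ∀ {p : Y → ℝ}, (∀ y, a y = 0 ∨ b y = 0 → p y = 0) →
      regObjective g a b η β p =
        (η + β) * (log (∑ z ∈ S, exp (h z)) * ∑ y, p y - KLdiv p (gibbs S h)) := by
    intro p hp
    have hsupp : ∀ y, p y ≠ 0 → a y ≠ 0 ∧ b y ≠ 0 := fun y hy =>
      not_or.1 fun hab => hy (hp y hab)
    rw [regObjective, KLdiv_gibbs S h (hS hp), KLdiv_eq_sum_mul_sub_log fun y hy => (hsupp y hy).1,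
      KLdiv_eq_sum_mul_sub_log fun y hy => (hsupp y hy).2, mul_sum, mul_sum, mul_sum,
      ← sum_sub_distrib, ← sum_sub_distrib, ← sum_add_distrib, mul_sub, mul_sum, mul_sum,
      ← sum_sub_distrib]
    refine sum_congr rfl fun y _ => ?_
    simp only [h]
    field_simp
    ring
  rw [show regMaximizer g a b η β = gibbs S h from rfl, hF hp, hF hp', hsum]
  ring

lemma regMaximizer_eq_zero_iff {y : Y} : regMaximizer g a b η β y = 0 ↔ a y = 0 ∨ b y = 0 := by
  rw [← not_iff_not, ← ne_eq, regMaximizer, gibbs_ne_zero_iff]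
  simp [not_or]

lemma eq_regMaximizer_of_isMax (hc : 0 < η + β) {p : Y → ℝ} (hp : IsProbVec p)
    (hpSupp : ∀ y, a y = 0 ∨ b y = 0 → p y = 0)
    (hmax : ∀ p', IsProbVec p' → (∀ y, a y = 0 ∨ b y = 0 → p' y = 0) →
      regObjective g a b η β p' ≤ regObjective g a b η β p) :
    p = regMaximizer g a b η β := by
  set q := regMaximizer g a b η β
  have hqSupp : ∀ y, a y = 0 ∨ b y = 0 → q y = 0 := fun y => regMaximizer_eq_zero_iff.2
  have hS : ({y | a y ≠ 0 ∧ b y ≠ 0} : Finset Y).Nonempty := by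
    obtain ⟨y, -, hy⟩ := exists_ne_zero_of_sum_ne_zero (hp.2.symm ▸ one_ne_zero)
    exact ⟨y, by simpa [← not_or] using mt (hpSupp y) hy⟩
  have hq : IsProbVec q := ⟨gibbs_nonneg _ _, sum_gibbs _ _ hS⟩
  have hKL : KLdiv p q ≤ 0 := by
    have h := sub_nonpos.2 (hmax q hq hqSupp)
    rw [regObjective_sub_regObjective hc.ne' hqSupp hpSupp (hq.2.trans hp.2.symm), KLdiv_self,
      sub_zero] at h
    exact nonpos_of_mul_nonpos_right h hc
  exact eq_of_KLdiv_nonpos hp.1 hq.1 (hp.2.trans hq.2.symm)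
    (fun y hy => hpSupp y (regMaximizer_eq_zero_iff.1 hy)) hKL

end RegularizedObjective

theorem three_point_KL_general
    {Y : Type*} [Fintype Y]
    (πold πref : Y → ℝ)
    (g : Y → ℝ) (η β : ℝ) (hη : 0 < η) (hβ : 0 < β)
    (πnew : Y → ℝ) (hπnew : IsProbVec πnew)
    (hπnewSupp : ∀ y, πold y = 0 ∨ πref y = 0 → πnew y = 0)
    (hmax : ∀ π : Y → ℝ, IsProbVec π → (∀ y, πold y = 0 ∨ πref y = 0 → π y = 0) →
      (∑ y, g y * π y) - η * KLdiv π πold - β * KLdiv π πref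
        ≤ (∑ y, g y * πnew y) - η * KLdiv πnew πold - β * KLdiv πnew πref)
    (π' : Y → ℝ) (hπ' : IsProbVec π')
    (hπ'Supp : ∀ y, πold y = 0 ∨ πref y = 0 → π' y = 0) :
    η * (-KLdiv π' πold + KLdiv π' πnew + KLdiv πnew πold) + β * KLdiv π' πnew
      ≤ (∑ y, g y * (πnew y - π' y)) - β * (KLdiv πnew πref - KLdiv π' πref) := by
  have hnew : πnew = regMaximizer g πold πref η β :=
    eq_regMaximizer_of_isMax (add_pos hη hβ) hπnew hπnewSupp hmax
  have key := regObjective_sub_regObjective (g := g) (add_pos hη hβ).ne' hπnewSupp hπ'Supp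
    (hπnew.2.trans hπ'.2.symm)
  rw [← hnew, KLdiv_self, sub_zero, regObjective, regObjective] at key
  simp only [mul_sub, Finset.sum_sub_distrib]
  linear_combination -key

/-- **Three-point inequality with KL regularization.**
If `π_new` maximizes `π ↦ ⟨g, π⟩ − η·KL(π‖π_old) − β·KL(π‖π_ref)` over the probability
vectors supported in `supp(π_old) ∩ supp(π_ref)`, then for every such `π'`:
`⟨g, π_new − π'⟩ − β(KL(π_new‖π_ref) − KL(π'‖π_ref))
  ≥ η(−KL(π'‖π_old) + KL(π'‖π_new) + KL(π_new‖π_old)) + β·KL(π'‖π_new)`. -/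
theorem three_point_KL
    {Y : Type*} [Fintype Y] [Nonempty Y]
    (πold πref : Y → ℝ) (hπold : IsProbVec πold) (hπref : IsProbVec πref)
    (g : Y → ℝ) (η β : ℝ) (hη : 0 < η) (hβ : 0 < β)
    (πnew : Y → ℝ) (hπnew : IsProbVec πnew)
    (hπnewSupp : ∀ y, πold y = 0 ∨ πref y = 0 → πnew y = 0)
    (hmax : ∀ π : Y → ℝ, IsProbVec π → (∀ y, πold y = 0 ∨ πref y = 0 → π y = 0) →
      (∑ y, g y * π y) - η * KLdiv π πold - β * KLdiv π πref
        ≤ (∑ y, g y * πnew y) - η * KLdiv πnew πold - β * KLdiv πnew πref)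
    (π' : Y → ℝ) (hπ' : IsProbVec π')
    (hπ'Supp : ∀ y, πold y = 0 ∨ πref y = 0 → π' y = 0) :
    η * (-KLdiv π' πold + KLdiv π' πnew + KLdiv πnew πold) + β * KLdiv π' πnew
      ≤ (∑ y, g y * (πnew y - π' y)) - β * (KLdiv πnew πref - KLdiv π' πref) :=
  three_point_KL_general πold πref g η β hη hβ πnew hπnew hπnewSupp hmax π' hπ' hπ'Supp
end

section
/- Primal–dual coupling bound (inequality from the proof of Theorem 1, eq. A_3). Let Y be a finite nonempty set, H a finite nonempty index set, and R_j : Y → ℝ with |R_j(y)| ≤ R_max for all j ∈ H and y ∈ Y. Let p, q be probability vectors on Y with supp(p) ⊆ supp(q), let λ, λ' ∈ ℝ^H, and let C > 0. Then Σ_{y∈Y} ( p(y) − q(y) )·Σ_{j∈H} ( λ_j − λ'_j )·R_j(y) ≤ C·KL(p‖q) + ( |H|·R_max² / (2C) )·‖λ − λ'‖₂². -/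
open BigOperators

/-!
Bounding each reward difference by `M = Rmax · Σ_j |λ_j - λ'_j|`, the left-hand side is at most
`‖p - q‖₁ · M`. Pinsker's inequality `‖p - q‖₁² ≤ 2 KL(p‖q)` and Young's inequality
`s M ≤ (C/2) s² + M²/(2C)` then give the claim, since `M² ≤ |H| Rmax² ‖λ - λ'‖₂²` by Cauchy–Schwarz.

Pinsker's inequality is obtained from the pointwise bound `3 (t - 1)² ≤ 2 (t + 2) klFun t`,
applied to `t = p(y)/q(y)` and summed with Cauchy–Schwarz against the weights `2 (p + 2q)/3`,
whose total mass is `2`.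
-/

open Real Set Finset InformationTheory

lemma hasDerivAt_add_one_mul_log_sub {x : ℝ} (hx : 0 < x) :
    HasDerivAt (fun x => (x + 1) * log x - 2 * (x - 1)) (klFun x / x) x := by
  have := (((hasDerivAt_id x).add_const 1).mul (hasDerivAt_log hx.ne')).sub
    (((hasDerivAt_id x).sub_const 1).const_mul 2)
  refine this.congr_deriv ?_
  simp only [klFun_apply, id]
  field_simp
  ring

lemma monotoneOn_add_one_mul_log_sub :
    MonotoneOn (fun x => (x + 1) * log x - 2 * (x - 1)) (Ioi 0) := by
  refine monotoneOn_of_hasDerivWithinAt_nonneg (f' := fun x => klFun x / x) (convex_Ioi 0)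
    (fun x hx => (hasDerivAt_add_one_mul_log_sub hx).continuousAt.continuousWithinAt)
    (fun x hx => ?_) (fun x hx => ?_) <;> rw [interior_Ioi] at hx
  · exact (hasDerivAt_add_one_mul_log_sub hx).hasDerivWithinAt
  · exact div_nonneg (klFun_nonneg hx.le) hx.le

lemma three_mul_sq_sub_one_le_mul_klFun {t : ℝ} (ht : 0 ≤ t) :
    3 * (t - 1) ^ 2 ≤ 2 * (t + 2) * klFun t := by
  set F : ℝ → ℝ := fun x => 2 * (x + 2) * klFun x - 3 * (x - 1) ^ 2
  set G : ℝ → ℝ := fun x => (x + 1) * log x - 2 * (x - 1)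
  have hF : ∀ x, 0 < x → HasDerivAt F (4 * G x) x := fun x hx => by
    have := ((((hasDerivAt_id x).add_const 2).const_mul 2).mul (hasDerivAt_klFun hx.ne')).sub
      ((((hasDerivAt_id x).sub_const 1).pow 2).const_mul 3)
    refine this.congr_deriv ?_
    simp only [klFun_apply, id, G]
    ring
  have hFcont : Continuous F := by fun_prop
  have hFdiff : ∀ a, 0 ≤ a → DifferentiableOn ℝ F (Ioi a) := fun a ha x hx =>
    (hF x (ha.trans_lt hx)).differentiableAt.differentiableWithinAt
  -- `F' = 4 G` changes sign at `1` because `G` is monotone and vanishes there.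
  have hG1 : G 1 = 0 := by simp [G]
  have hmin : IsMinOn F (Ici 0) 1 := by
    refine isMinOn_Ici_of_deriv hFcont.continuousAt hFcont.continuousAt
      ((hFdiff 0 le_rfl).mono Ioo_subset_Ioi_self) (hFdiff 1 zero_le_one) (fun x hx => ?_)
      (fun x hx => ?_)
    · rw [(hF x hx.1).deriv]
      have : G x ≤ G 1 := monotoneOn_add_one_mul_log_sub hx.1 (mem_Ioi.2 one_pos) hx.2.le
      linarith
    · rw [(hF x (one_pos.trans hx)).deriv]
      have : G 1 ≤ G x := monotoneOn_add_one_mul_log_sub (mem_Ioi.2 one_pos)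
        (mem_Ioi.2 (one_pos.trans hx)) hx.le
      linarith
  have : F 1 ≤ F t := hmin (mem_Ici.2 ht)
  simp only [F, klFun_one] at this
  linarith

lemma mul_klFun_div {a b : ℝ} (hab : b = 0 → a = 0) :
    b * klFun (a / b) = a * log (a / b) + b - a := by
  rcases eq_or_ne b 0 with hb | hb
  · simp [hb, hab hb]
  · rw [klFun_apply]
    field_simp

lemma sq_sub_le_mul_mul_klFun_div {a b : ℝ} (ha : 0 ≤ a) (hb : 0 ≤ b) (hab : b = 0 → a = 0) :
    (a - b) ^ 2 ≤ 2 * (a + 2 * b) / 3 * (b * klFun (a / b)) := by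
  rcases hb.eq_or_lt with hb0 | hb0
  · simp [← hb0, hab hb0.symm]
  · obtain ⟨t, ht, rfl⟩ : ∃ t, 0 ≤ t ∧ a = t * b :=
      ⟨a / b, div_nonneg ha hb, (div_mul_cancel₀ a hb0.ne').symm⟩
    calc (t * b - b) ^ 2 = b ^ 2 * (3 * (t - 1) ^ 2) / 3 := by ring
      _ ≤ b ^ 2 * (2 * (t + 2) * klFun t) / 3 := by
        gcongr b ^ 2 * ?_ / 3
        exact three_mul_sq_sub_one_le_mul_klFun ht
      _ = 2 * (t * b + 2 * b) / 3 * (b * klFun (t * b / b)) := by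
        rw [mul_div_cancel_right₀ t hb0.ne']
        ring

lemma KLdiv_eq_sum_mul_klFun {Y : Type*} [Fintype Y] {p q : Y → ℝ} (hp : ∑ y, p y = 1)
    (hq : ∑ y, q y = 1) (hsupp : ∀ y, q y = 0 → p y = 0) :
    KLdiv p q = ∑ y, q y * klFun (p y / q y) := by
  have hterm y : q y * klFun (p y / q y) = p y * log (p y / q y) + q y - p y :=
    mul_klFun_div (hsupp y)
  simp_rw [hterm, sum_sub_distrib, sum_add_distrib, hp, hq, KLdiv]
  ring

theorem sq_sum_abs_sub_le_two_mul_KLdiv {Y : Type*} [Fintype Y] {p q : Y → ℝ} (hp : IsProbVec p)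
    (hq : IsProbVec q) (hsupp : ∀ y, q y = 0 → p y = 0) :
    (∑ y, |p y - q y|) ^ 2 ≤ 2 * KLdiv p q := by
  have hmass : ∑ y, 2 * (p y + 2 * q y) / 3 = 2 := by
    rw [← sum_div, ← mul_sum, sum_add_distrib, ← mul_sum, hp.2, hq.2]
    norm_num
  calc (∑ y, |p y - q y|) ^ 2
      ≤ (∑ y, 2 * (p y + 2 * q y) / 3) * ∑ y, q y * klFun (p y / q y) :=
        sum_sq_le_sum_mul_sum_of_sq_le_mul _
          (fun y _ => by linarith [hp.1 y, hq.1 y])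
          (fun y _ => mul_nonneg (hq.1 y) (klFun_nonneg (div_nonneg (hp.1 y) (hq.1 y))))
          (fun y _ => by rw [sq_abs]; exact sq_sub_le_mul_mul_klFun_div (hp.1 y) (hq.1 y) (hsupp y))
    _ = 2 * KLdiv p q := by rw [hmass, KLdiv_eq_sum_mul_klFun hp.2 hq.2 hsupp]

lemma abs_sum_mul_le_sum_abs_mul {ι : Type*} (s : Finset ι) (g f : ι → ℝ) {M : ℝ}
    (hf : ∀ i ∈ s, |f i| ≤ M) : |∑ i ∈ s, g i * f i| ≤ (∑ i ∈ s, |g i|) * M := by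
  grw [abs_sum_le_sum_abs, sum_mul]
  gcongr with i hi
  rw [abs_mul]
  exact mul_le_mul_of_nonneg_left (hf i hi) (abs_nonneg _)

lemma mul_le_half_mul_sq_add_sq_div {C : ℝ} (hC : 0 < C) (x y : ℝ) :
    x * y ≤ C / 2 * x ^ 2 + y ^ 2 / (2 * C) := by
  have hsq : 0 ≤ (C * x - y) ^ 2 / (2 * C) := by positivity
  have hexpand : (C * x - y) ^ 2 / (2 * C) = C / 2 * x ^ 2 - x * y + y ^ 2 / (2 * C) := by
    field_simp
    ring
  linarith

theorem primal_dual_coupling_bound_general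
    {Y H : Type*} [Fintype Y] [Fintype H]
    (R : H → Y → ℝ) (Rmax : ℝ) (hR : ∀ j y, |R j y| ≤ Rmax)
    (p q : Y → ℝ) (hp : IsProbVec p) (hq : IsProbVec q)
    (hsupp : ∀ y, q y = 0 → p y = 0)
    (lam lam' : H → ℝ) (C : ℝ) (hC : 0 < C) :
    ∑ y, (p y - q y) * ∑ j, (lam j - lam' j) * R j y
      ≤ C * KLdiv p q + (Fintype.card H * Rmax ^ 2 / (2 * C)) * ∑ j, (lam j - lam' j) ^ 2 := by
  set M := (∑ j, |lam j - lam' j|) * Rmax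
  set S := ∑ y, |p y - q y|
  have hreward : ∀ y, |∑ j, (lam j - lam' j) * R j y| ≤ M := fun y =>
    abs_sum_mul_le_sum_abs_mul _ _ _ fun j _ => hR j y
  have hM : M ^ 2 ≤ Fintype.card H * Rmax ^ 2 * ∑ j, (lam j - lam' j) ^ 2 := by
    have hcs := sq_sum_le_card_mul_sum_sq (s := univ) (f := fun j => |lam j - lam' j|)
    simp only [sq_abs, card_univ] at hcs
    calc M ^ 2 = (∑ j, |lam j - lam' j|) ^ 2 * Rmax ^ 2 := mul_pow ..
      _ ≤ (Fintype.card H * ∑ j, (lam j - lam' j) ^ 2) * Rmax ^ 2 := by gcongr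
      _ = _ := by ring
  have hpinsker : S ^ 2 ≤ 2 * KLdiv p q := sq_sum_abs_sub_le_two_mul_KLdiv hp hq hsupp
  calc ∑ y, (p y - q y) * ∑ j, (lam j - lam' j) * R j y
      ≤ S * M := (le_abs_self _).trans (abs_sum_mul_le_sum_abs_mul _ _ _ fun y _ => hreward y)
    _ ≤ C / 2 * S ^ 2 + M ^ 2 / (2 * C) := mul_le_half_mul_sq_add_sq_div hC S M
    _ ≤ C / 2 * (2 * KLdiv p q)
          + (Fintype.card H * Rmax ^ 2 * ∑ j, (lam j - lam' j) ^ 2) / (2 * C) := by gcongr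
    _ = _ := by ring

/-- **Primal–dual coupling bound** (eq. A_3 in the proof of Theorem 1).
For probability vectors `p, q` with `supp(p) ⊆ supp(q)`, bounded rewards
`|R_j(y)| ≤ R_max`, dual vectors `λ, λ'` and any `C > 0`:
`Σ_y (p(y) − q(y))·Σ_j (λ_j − λ'_j)·R_j(y) ≤ C·KL(p‖q) + (|H|·R_max²/(2C))·‖λ − λ'‖₂²`. -/
theorem primal_dual_coupling_bound
    {Y H : Type*} [Fintype Y] [Fintype H] [Nonempty Y] [Nonempty H]
    (R : H → Y → ℝ) (Rmax : ℝ) (hR : ∀ j y, |R j y| ≤ Rmax)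
    (p q : Y → ℝ) (hp : IsProbVec p) (hq : IsProbVec q)
    (hsupp : ∀ y, q y = 0 → p y = 0)
    (lam lam' : H → ℝ) (C : ℝ) (hC : 0 < C) :
    ∑ y, (p y - q y) * ∑ j, (lam j - lam' j) * R j y
      ≤ C * KLdiv p q + (Fintype.card H * Rmax ^ 2 / (2 * C)) * ∑ j, (lam j - lam' j) ^ 2 :=
  primal_dual_coupling_bound_general R Rmax hR p q hp hq hsupp lam lam' C hC
end

section
/- ℓ₁-bound on the optimal dual variable under Slater's condition (Lemma, bdd_lambda). Assume Slater's condition: there exist a policy π̄ and ξ > 0 with E_{x∼D, y∼π̄(·|x)}[R_j(x,y)] ≥ ξ for all j ∈ H. Define J(π) := E_{x∼D}[ Σ_y π(y|x)·Σ_{k∈S} w_k R_k(x,y) − β·KL(π(·|x)‖π_ref(·|x)) ]. Let (π*, λ*) be a saddle point of the Lagrangian: λ* ∈ ℝ^H with λ* ≥ 0 componentwise, π* maximizes π ↦ L(π, λ*) over all policies, and λ* minimizes λ ↦ L(π*, λ) over λ ≥ 0. Then ‖λ*‖₁ ≤ (1/ξ)·( J(π*) − J(π̄) ). -/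
open BigOperators

/-- A policy assigns to each prompt `x` a probability vector on responses. -/
def IsPolicy {X Y : Type*} [Fintype Y] (π : X → Y → ℝ) : Prop :=
  ∀ x, (∀ y, 0 ≤ π x y) ∧ ∑ y, π x y = 1

/-!
Write the Lagrangian as `L(π, λ) = J(π) + Σ_j λ_j g_j(π)` with `g_j(π) = E_{x∼D, y∼π}[R_j]`.
Minimality of `λ*` against `λ = 0` gives `L(π*, λ*) ≤ J(π*)`; maximality of `π*` against the
Slater policy gives `L(π̄, λ*) ≤ L(π*, λ*)`, and `L(π̄, λ*) ≥ J(π̄) + ξ Σ_j λ*_j` since `λ* ≥ 0`.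
Hence `ξ ‖λ*‖₁ ≤ J(π*) − J(π̄)`.
-/

theorem weighted_sum_add_lin_comb_split {X Y H : Type*} [Fintype X] [Fintype Y] [Fintype H]
    (D : X → ℝ) (π a : X → Y → ℝ) (r : H → X → Y → ℝ) (K : X → ℝ) (lam : H → ℝ) :
    ∑ x, D x * ((∑ y, π x y * (a x y + ∑ j, lam j * r j x y)) - K x)
      = ∑ x, D x * ((∑ y, π x y * a x y) - K x)
        + ∑ j, lam j * ∑ x, D x * ∑ y, π x y * r j x y := by
  simp only [mul_add, Finset.sum_add_distrib, Finset.mul_sum, add_sub_right_comm, mul_sub]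
  rw [Finset.sum_comm_cycle]
  congr 1
  exact Finset.sum_congr rfl fun j _ => Finset.sum_congr rfl fun x _ =>
    Finset.sum_congr rfl fun y _ => by ring

theorem slater_dual_l1_bound {P H : Type*} [Fintype H]
    (J : P → ℝ) (g : H → P → ℝ) (L : P → (H → ℝ) → ℝ)
    (hL : ∀ π lam, L π lam = J π + ∑ j, lam j * g j π)
    {πbar πstar : P} {lamstar : H → ℝ} {ξ : ℝ} (hξ : 0 < ξ)
    (hslater : ∀ j, ξ ≤ g j πbar) (hlamstar0 : ∀ j, 0 ≤ lamstar j)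
    (hmax : L πbar lamstar ≤ L πstar lamstar) (hmin : L πstar lamstar ≤ L πstar 0) :
    ∑ j, |lamstar j| ≤ (1 / ξ) * (J πstar - J πbar) := by
  have hmargin : ξ * ∑ j, lamstar j ≤ ∑ j, lamstar j * g j πbar := by
    rw [Finset.mul_sum]
    exact Finset.sum_le_sum fun j _ => by
      rw [mul_comm]; exact mul_le_mul_of_nonneg_left (hslater j) (hlamstar0 j)
  have habs : ∑ j, |lamstar j| = ∑ j, lamstar j :=
    Finset.sum_congr rfl fun j _ => abs_of_nonneg (hlamstar0 j)
  simp only [hL, Pi.zero_apply, zero_mul, Finset.sum_const_zero, add_zero] at hmax hmin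
  rw [habs, one_div, inv_mul_eq_div, le_div_iff₀ hξ]
  linarith

theorem dual_variable_l1_bound_general
    {X Y S H : Type*} [Fintype X] [Fintype Y] [Fintype S] [Fintype H]
    (D : X → ℝ)
    (w : S → ℝ)
    (RS : S → X → Y → ℝ) (RH : H → X → Y → ℝ)
    (πref : X → Y → ℝ)
    (β : ℝ)
    (Slam : (H → ℝ) → X → Y → ℝ)
    (hSlam : ∀ lam x y, Slam lam x y = (∑ k, w k * RS k x y) + ∑ j, lam j * RH j x y)
    (L : (X → Y → ℝ) → (H → ℝ) → ℝ)
    (hL : ∀ π lam, L π lam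
      = ∑ x, D x * ((∑ y, π x y * Slam lam x y) - β * KLdiv (π x) (πref x)))
    (J : (X → Y → ℝ) → ℝ)
    (hJ : ∀ π, J π
      = ∑ x, D x * ((∑ y, π x y * ∑ k, w k * RS k x y) - β * KLdiv (π x) (πref x)))
    -- Slater's condition
    (πbar : X → Y → ℝ) (hπbar : IsPolicy πbar) (ξ : ℝ) (hξ : 0 < ξ)
    (hslater : ∀ j, ξ ≤ ∑ x, D x * ∑ y, πbar x y * RH j x y)
    -- saddle point
    (πstar : X → Y → ℝ)
    (lamstar : H → ℝ) (hlamstar0 : ∀ j, 0 ≤ lamstar j)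
    (hπstarMax : ∀ π : X → Y → ℝ, IsPolicy π → L π lamstar ≤ L πstar lamstar)
    (hlamstarMin : ∀ lam : H → ℝ, (∀ j, 0 ≤ lam j) → L πstar lamstar ≤ L πstar lam) :
    ∑ j, |lamstar j| ≤ (1 / ξ) * (J πstar - J πbar) := by
  have hsplit : ∀ π lam, L π lam = J π + ∑ j, lam j * ∑ x, D x * ∑ y, π x y * RH j x y :=
    fun π lam => by
      simp only [hL, hJ, hSlam]
      exact weighted_sum_add_lin_comb_split D π _ RH _ lam
  exact slater_dual_l1_bound J _ L hsplit hξ hslater hlamstar0 (hπstarMax πbar hπbar)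
    (hlamstarMin 0 fun _ => le_rfl)

/-- **ℓ₁-bound on the optimal dual variable under Slater's condition**
(Lemma `bdd_lambda`). If a strictly feasible policy `π̄` with margin `ξ > 0` exists,
then any saddle point `(π*, λ*)` of the Lagrangian satisfies
`‖λ*‖₁ ≤ (1/ξ)(J(π*) − J(π̄))`, where `J` is the KL-regularized soft-reward objective. -/
theorem dual_variable_l1_bound
    {X Y S H : Type*} [Fintype X] [Fintype Y] [Fintype S] [Fintype H]
    [Nonempty X] [Nonempty Y] [Nonempty H]
    (D : X → ℝ) (hD0 : ∀ x, 0 ≤ D x) (hD1 : ∑ x, D x = 1)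
    (w : S → ℝ) (hw0 : ∀ k, 0 ≤ w k) (hw1 : ∑ k, w k = 1)
    (RS : S → X → Y → ℝ) (RH : H → X → Y → ℝ)
    (πref : X → Y → ℝ) (hπref : IsPolicy πref)
    (β : ℝ) (hβ : 0 < β)
    (Slam : (H → ℝ) → X → Y → ℝ)
    (hSlam : ∀ lam x y, Slam lam x y = (∑ k, w k * RS k x y) + ∑ j, lam j * RH j x y)
    (L : (X → Y → ℝ) → (H → ℝ) → ℝ)
    (hL : ∀ π lam, L π lam
      = ∑ x, D x * ((∑ y, π x y * Slam lam x y) - β * KLdiv (π x) (πref x)))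
    (J : (X → Y → ℝ) → ℝ)
    (hJ : ∀ π, J π
      = ∑ x, D x * ((∑ y, π x y * ∑ k, w k * RS k x y) - β * KLdiv (π x) (πref x)))
    -- Slater's condition
    (πbar : X → Y → ℝ) (hπbar : IsPolicy πbar) (ξ : ℝ) (hξ : 0 < ξ)
    (hslater : ∀ j, ξ ≤ ∑ x, D x * ∑ y, πbar x y * RH j x y)
    -- saddle point
    (πstar : X → Y → ℝ) (hπstar : IsPolicy πstar)
    (lamstar : H → ℝ) (hlamstar0 : ∀ j, 0 ≤ lamstar j)
    (hπstarMax : ∀ π : X → Y → ℝ, IsPolicy π → L π lamstar ≤ L πstar lamstar)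
    (hlamstarMin : ∀ lam : H → ℝ, (∀ j, 0 ≤ lam j) → L πstar lamstar ≤ L πstar lam) :
    ∑ j, |lamstar j| ≤ (1 / ξ) * (J πstar - J πbar) :=
  dual_variable_l1_bound_general D w RS RH πref β Slam hSlam L hL J hJ πbar hπbar ξ hξ hslater πstar
    lamstar hlamstar0 hπstarMax hlamstarMin
end

section
/- Explicit bound on the optimal dual variable (Remark after Lemma bdd_lambda). Assume: (i) Slater's condition with constant ξ > 0 (there is a policy π̄ with E_{x∼D, y∼π̄(·|x)}[R_j(x,y)] ≥ ξ for all j ∈ H); (ii) bounded rewards: |R_k(x,y)| ≤ R_max for all k ∈ S ∪ H and all (x,y); (iii) full-support reference: π_ref(y|x) ≥ p_min with p_min ∈ (0,1] for all (x,y). Then any saddle point (π*, λ*) of the Lagrangian (λ* ≥ 0, π* maximizes L(·, λ*) over all policies, λ* minimizes L(π*, ·) over λ ≥ 0) satisfies ‖λ*‖₁ ≤ (2/ξ)·( R_max + β·log(1/p_min) ). -/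
open BigOperators

/-!
Write the Lagrangian as `L(π, λ) = J(π) + Σ_j λ_j G_j(π)`, where `J` is the KL-regularised
expected reward and `G_j` the expected value of the constraint reward `R_j`. Minimality of `λ*`
tested against `λ = 0` gives `Σ_j λ*_j G_j(π*) ≤ 0`, and maximality of `π*` tested against the
Slater policy `π̄` then gives `J(π̄) + ξ ‖λ*‖₁ ≤ J(π*)`. Finally `J(π*) ≤ R_max` because the KL
term is nonnegative, and `J(π̄) ≥ -R_max - β log(1/p_min)` because `KL(p‖q) ≤ log(1/p_min)`
whenever `q ≥ p_min`; the same two KL bounds show `log(1/p_min) ≥ 0`.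
-/

open Finset

section WeightedSum

variable {ι : Type*} [Fintype ι] {p f : ι → ℝ} {M : ℝ}

lemma sum_mul_le_of_le (hp0 : ∀ i, 0 ≤ p i) (hp1 : ∑ i, p i = 1) (hf : ∀ i, f i ≤ M) :
    ∑ i, p i * f i ≤ M :=
  calc ∑ i, p i * f i ≤ ∑ i, p i * M :=
        sum_le_sum fun i _ => mul_le_mul_of_nonneg_left (hf i) (hp0 i)
    _ = M := by rw [← sum_mul, hp1, one_mul]

lemma le_sum_mul_of_le (hp0 : ∀ i, 0 ≤ p i) (hp1 : ∑ i, p i = 1) (hf : ∀ i, M ≤ f i) :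
    M ≤ ∑ i, p i * f i :=
  calc M = ∑ i, p i * M := by rw [← sum_mul, hp1, one_mul]
    _ ≤ ∑ i, p i * f i := sum_le_sum fun i _ => mul_le_mul_of_nonneg_left (hf i) (hp0 i)

lemma abs_sum_mul_le_of_abs_le (hp0 : ∀ i, 0 ≤ p i) (hp1 : ∑ i, p i = 1)
    (hf : ∀ i, |f i| ≤ M) : |∑ i, p i * f i| ≤ M :=
  abs_le.2 ⟨le_sum_mul_of_le hp0 hp1 fun i => (abs_le.1 (hf i)).1,
    sum_mul_le_of_le hp0 hp1 fun i => (abs_le.1 (hf i)).2⟩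

end WeightedSum

section KLdiv

variable {Y : Type*} [Fintype Y] {p q : Y → ℝ}

lemma sub_le_mul_log_div {a b : ℝ} (ha : 0 ≤ a) (hb : 0 < b) :
    a - b ≤ a * Real.log (a / b) := by
  rcases ha.eq_or_lt with rfl | ha
  · simpa using hb.le
  · have h := mul_le_mul_of_nonneg_left (Real.one_sub_inv_le_log_of_pos (div_pos ha hb)) ha.le
    rwa [inv_div, mul_sub, mul_one, mul_div_cancel₀ _ ha.ne'] at h

lemma KLdiv_nonneg (hp0 : ∀ y, 0 ≤ p y) (hp1 : ∑ y, p y = 1) (hq0 : ∀ y, 0 < q y)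
    (hq1 : ∑ y, q y ≤ 1) : 0 ≤ KLdiv p q :=
  calc 0 ≤ ∑ y, (p y - q y) := by rw [sum_sub_distrib, hp1]; linarith
    _ ≤ KLdiv p q := sum_le_sum fun y _ => sub_le_mul_log_div (hp0 y) (hq0 y)

lemma KLdiv_le_log_one_div {m : ℝ} (hp0 : ∀ y, 0 ≤ p y) (hp1 : ∑ y, p y = 1) (hm : 0 < m)
    (hq : ∀ y, m ≤ q y) : KLdiv p q ≤ Real.log (1 / m) := by
  have hlog_le : ∀ y, p y * Real.log (p y / q y) ≤ p y * Real.log (1 / m) := by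
    intro y
    rcases (hp0 y).eq_or_lt with hy | hy
    · simp [← hy]
    have hp_le_one : p y ≤ 1 := hp1 ▸ single_le_sum (fun i _ => hp0 i) (mem_univ y)
    refine mul_le_mul_of_nonneg_left (Real.log_le_log (div_pos hy (hm.trans_le (hq y))) ?_) hy.le
    exact div_le_div₀ zero_le_one hp_le_one hm (hq y)
  calc KLdiv p q ≤ ∑ y, p y * Real.log (1 / m) := sum_le_sum fun y _ => hlog_le y
    _ = Real.log (1 / m) := by rw [← sum_mul, hp1, one_mul]

end KLdiv

section Policy

variable {X Y : Type*} [Fintype X] [Fintype Y]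

def expectedReward (D : X → ℝ) (π R : X → Y → ℝ) : ℝ :=
  ∑ x, D x * ∑ y, π x y * R x y

noncomputable def expectedKL (D : X → ℝ) (π πref : X → Y → ℝ) : ℝ :=
  ∑ x, D x * KLdiv (π x) (πref x)

variable {D : X → ℝ} {π : X → Y → ℝ}

lemma expectedReward_add (R R' : X → Y → ℝ) :
    expectedReward D π (fun x y => R x y + R' x y)
      = expectedReward D π R + expectedReward D π R' := by
  simp only [expectedReward, mul_add, sum_add_distrib]

lemma expectedReward_sum_mul {H : Type*} [Fintype H] (c : H → ℝ) (R : H → X → Y → ℝ) :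
    expectedReward D π (fun x y => ∑ j, c j * R j x y)
      = ∑ j, c j * expectedReward D π (R j) := by
  symm
  simp only [expectedReward, mul_sum]
  rw [sum_comm]
  refine sum_congr rfl fun x _ => ?_
  rw [sum_comm]
  exact sum_congr rfl fun y _ => sum_congr rfl fun j _ => by ring

lemma abs_expectedReward_le {R : X → Y → ℝ} {M : ℝ} (hD0 : ∀ x, 0 ≤ D x)
    (hD1 : ∑ x, D x = 1) (hπ : IsPolicy π) (hR : ∀ x y, |R x y| ≤ M) :
    |expectedReward D π R| ≤ M :=
  abs_sum_mul_le_of_abs_le hD0 hD1 fun x => abs_sum_mul_le_of_abs_le (hπ x).1 (hπ x).2 (hR x)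

lemma expectedKL_nonneg {πref : X → Y → ℝ} (hD0 : ∀ x, 0 ≤ D x) (hπ : IsPolicy π)
    (hπref : IsPolicy πref) (hπref0 : ∀ x y, 0 < πref x y) : 0 ≤ expectedKL D π πref :=
  sum_nonneg fun x _ => mul_nonneg (hD0 x)
    (KLdiv_nonneg (hπ x).1 (hπ x).2 (hπref0 x) (hπref x).2.le)

lemma expectedKL_le_log_one_div {πref : X → Y → ℝ} {m : ℝ} (hD0 : ∀ x, 0 ≤ D x)
    (hD1 : ∑ x, D x = 1) (hπ : IsPolicy π) (hm : 0 < m) (hπref : ∀ x y, m ≤ πref x y) :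
    expectedKL D π πref ≤ Real.log (1 / m) :=
  sum_mul_le_of_le hD0 hD1 fun x => KLdiv_le_log_one_div (hπ x).1 (hπ x).2 hm (hπref x)

end Policy

lemma mul_sum_dual_le_of_slater {P H : Type*} [Fintype H] {A : P → ℝ} {G : P → H → ℝ}
    {L : P → (H → ℝ) → ℝ} (hL : ∀ π lam, L π lam = A π + ∑ j, lam j * G π j)
    {ξ : ℝ} {πbar πstar : P} {lamstar : H → ℝ} (hslater : ∀ j, ξ ≤ G πbar j)
    (hlamstar0 : ∀ j, 0 ≤ lamstar j) (hmax : L πbar lamstar ≤ L πstar lamstar)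
    (hmin : L πstar lamstar ≤ L πstar 0) :
    ξ * ∑ j, lamstar j ≤ A πstar - A πbar := by
  rw [hL, hL] at hmax
  rw [hL, hL] at hmin
  have hslack : ∑ j, lamstar j * G πstar j ≤ 0 := by simpa using hmin
  have hslater_sum : ξ * ∑ j, lamstar j ≤ ∑ j, lamstar j * G πbar j := by
    rw [mul_sum]
    exact sum_le_sum fun j _ => by
      rw [mul_comm]; exact mul_le_mul_of_nonneg_left (hslater j) (hlamstar0 j)
  linarith

theorem dual_variable_explicit_bound_general
    {X Y S H : Type*} [Fintype X] [Fintype Y] [Fintype S] [Fintype H]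
    (D : X → ℝ) (hD0 : ∀ x, 0 ≤ D x) (hD1 : ∑ x, D x = 1)
    (w : S → ℝ) (hw0 : ∀ k, 0 ≤ w k) (hw1 : ∑ k, w k = 1)
    (RS : S → X → Y → ℝ) (RH : H → X → Y → ℝ)
    (Rmax : ℝ)
    (hRS : ∀ k x y, |RS k x y| ≤ Rmax)
    (πref : X → Y → ℝ) (hπref : IsPolicy πref)
    (pmin : ℝ) (hpmin0 : 0 < pmin)
    (hπrefmin : ∀ x y, pmin ≤ πref x y)
    (β : ℝ) (hβ : 0 < β)
    (Slam : (H → ℝ) → X → Y → ℝ)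
    (hSlam : ∀ lam x y, Slam lam x y = (∑ k, w k * RS k x y) + ∑ j, lam j * RH j x y)
    (L : (X → Y → ℝ) → (H → ℝ) → ℝ)
    (hL : ∀ π lam, L π lam
      = ∑ x, D x * ((∑ y, π x y * Slam lam x y) - β * KLdiv (π x) (πref x)))
    -- Slater's condition
    (πbar : X → Y → ℝ) (hπbar : IsPolicy πbar) (ξ : ℝ) (hξ : 0 < ξ)
    (hslater : ∀ j, ξ ≤ ∑ x, D x * ∑ y, πbar x y * RH j x y)
    -- saddle point
    (πstar : X → Y → ℝ) (hπstar : IsPolicy πstar)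
    (lamstar : H → ℝ) (hlamstar0 : ∀ j, 0 ≤ lamstar j)
    (hπstarMax : ∀ π : X → Y → ℝ, IsPolicy π → L π lamstar ≤ L πstar lamstar)
    (hlamstarMin : ∀ lam : H → ℝ, (∀ j, 0 ≤ lam j) → L πstar lamstar ≤ L πstar lam) :
    ∑ j, |lamstar j| ≤ (2 / ξ) * (Rmax + β * Real.log (1 / pmin)) := by
  set r : X → Y → ℝ := fun x y => ∑ k, w k * RS k x y
  have hLsplit : ∀ π lam, L π lam = (expectedReward D π r - β * expectedKL D π πref)
      + ∑ j, lam j * expectedReward D π (RH j) := by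
    intro π lam
    have hS : Slam lam = fun x y => r x y + ∑ j, lam j * RH j x y := funext₂ (hSlam lam)
    rw [← expectedReward_sum_mul, ← add_sub_right_comm, ← expectedReward_add, ← hS, hL,
      expectedReward, expectedKL, mul_sum, ← sum_sub_distrib]
    exact sum_congr rfl fun x _ => by ring
  have hdual := mul_sum_dual_le_of_slater hLsplit hslater hlamstar0 (hπstarMax πbar hπbar)
    (hlamstarMin 0 fun _ => le_rfl)
  have hπref0 : ∀ x y, 0 < πref x y := fun x y => hpmin0.trans_le (hπrefmin x y)
  have hr : ∀ x y, |r x y| ≤ Rmax := fun x y => abs_sum_mul_le_of_abs_le hw0 hw1 (hRS · x y)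
  have hRstar := abs_le.1 (abs_expectedReward_le hD0 hD1 hπstar hr)
  have hRbar := abs_le.1 (abs_expectedReward_le hD0 hD1 hπbar hr)
  have hKLstar := expectedKL_nonneg hD0 hπstar hπref hπref0
  have hKLbar := expectedKL_nonneg hD0 hπbar hπref hπref0
  have hKLbar_le := expectedKL_le_log_one_div hD0 hD1 hπbar hpmin0 hπrefmin
  rw [sum_congr rfl fun j _ => abs_of_nonneg (hlamstar0 j), div_mul_eq_mul_div, le_div_iff₀ hξ]
  linarith [mul_nonneg hβ.le hKLstar, mul_nonneg hβ.le hKLbar,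
    mul_le_mul_of_nonneg_left hKLbar_le hβ.le]

/-- **Explicit bound on the optimal dual variable** (Remark after Lemma `bdd_lambda`).
Under Slater's condition with margin `ξ > 0`, bounded rewards `|R_k| ≤ R_max`, and a
reference policy with full support `π_ref ≥ p_min > 0`, any saddle point `(π*, λ*)`
of the Lagrangian satisfies `‖λ*‖₁ ≤ (2/ξ)(R_max + β·log(1/p_min))`. -/
theorem dual_variable_explicit_bound
    {X Y S H : Type*} [Fintype X] [Fintype Y] [Fintype S] [Fintype H]
    [Nonempty X] [Nonempty Y] [Nonempty H]
    (D : X → ℝ) (hD0 : ∀ x, 0 ≤ D x) (hD1 : ∑ x, D x = 1)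
    (w : S → ℝ) (hw0 : ∀ k, 0 ≤ w k) (hw1 : ∑ k, w k = 1)
    (RS : S → X → Y → ℝ) (RH : H → X → Y → ℝ)
    (Rmax : ℝ) (hRmax : 0 < Rmax)
    (hRS : ∀ k x y, |RS k x y| ≤ Rmax) (hRH : ∀ j x y, |RH j x y| ≤ Rmax)
    (πref : X → Y → ℝ) (hπref : IsPolicy πref)
    (pmin : ℝ) (hpmin0 : 0 < pmin) (hpmin1 : pmin ≤ 1)
    (hπrefmin : ∀ x y, pmin ≤ πref x y)
    (β : ℝ) (hβ : 0 < β)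
    (Slam : (H → ℝ) → X → Y → ℝ)
    (hSlam : ∀ lam x y, Slam lam x y = (∑ k, w k * RS k x y) + ∑ j, lam j * RH j x y)
    (L : (X → Y → ℝ) → (H → ℝ) → ℝ)
    (hL : ∀ π lam, L π lam
      = ∑ x, D x * ((∑ y, π x y * Slam lam x y) - β * KLdiv (π x) (πref x)))
    -- Slater's condition
    (πbar : X → Y → ℝ) (hπbar : IsPolicy πbar) (ξ : ℝ) (hξ : 0 < ξ)
    (hslater : ∀ j, ξ ≤ ∑ x, D x * ∑ y, πbar x y * RH j x y)
    -- saddle point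
    (πstar : X → Y → ℝ) (hπstar : IsPolicy πstar)
    (lamstar : H → ℝ) (hlamstar0 : ∀ j, 0 ≤ lamstar j)
    (hπstarMax : ∀ π : X → Y → ℝ, IsPolicy π → L π lamstar ≤ L πstar lamstar)
    (hlamstarMin : ∀ lam : H → ℝ, (∀ j, 0 ≤ lam j) → L πstar lamstar ≤ L πstar lam) :
    ∑ j, |lamstar j| ≤ (2 / ξ) * (Rmax + β * Real.log (1 / pmin)) :=
  dual_variable_explicit_bound_general D hD0 hD1 w hw0 hw1 RS RH Rmax hRS πref hπref pmin hpmin0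
    hπrefmin β hβ Slam hSlam L hL πbar hπbar ξ hξ hslater πstar hπstar lamstar hlamstar0 hπstarMax
    hlamstarMin
end

section
/- Advantage form of the policy gradient for the KL-regularized objective under tabular softmax parameterization (appendix computation, single-state version). Let Y be a finite nonempty set, π_ref a strictly positive probability vector on Y, S : Y → ℝ, and β > 0. For θ : Y → ℝ let π_θ(y) := exp(θ(y)) / Σ_{y'} exp(θ(y')), and define L(θ) := Σ_y π_θ(y)·( S(y) − β·log(π_θ(y)/π_ref(y)) ). Then L is differentiable in θ and, for every y ∈ Y, the partial derivative of L with respect to the coordinate θ(y) equals π_θ(y)·A_θ(y), where the advantage is A_θ(y) := S(y) − β·log(π_θ(y)/π_ref(y)) − L(θ). -/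
/-!
Write `π = softmax θ` and `p = ∑ y, π y • proj y`, the gradient of `logSumExp`. Since
`log π y = θ y - logSumExp θ`, each coordinate has gradient `π y • (proj y - p)`, and the product
rule turns the gradient of an expectation `E = ∑ y, π y * g y θ` into the expected gradient of
`g` plus the covariance term `∑ y, (π y * (g y θ - E)) • proj y`. For the KL-regularised reward,
`g y θ = S y - β * (θ y - logSumExp θ - log πref y)` has gradient `-β • (proj y - p)`, whose
expectation vanishes because `∑ y, π y = 1`; only the covariance term, the advantage, survives.
-/

open Real Finset

noncomputable section

variable {Y : Type*} [Fintype Y]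

local notation "proj" => ContinuousLinearMap.proj (R := ℝ) (φ := fun _ => ℝ)

def logSumExp (θ : Y → ℝ) : ℝ := log (∑ y, exp (θ y))

def softmax (θ : Y → ℝ) (y : Y) : ℝ := exp (θ y) / ∑ y', exp (θ y')

theorem sum_smul_smul_sub_sum_smul {R M : Type*} [CommRing R] [AddCommGroup M] [Module R M]
    (w g : Y → R) (e : Y → M) :
    ∑ y, g y • w y • (e y - ∑ y', w y' • e y')
      = ∑ y, (w y * (g y - ∑ y', w y' * g y')) • e y := by
  simp only [smul_smul, smul_sub, sum_sub_distrib, mul_sub, sub_smul, mul_comm (g _)]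
  congr 1
  rw [← sum_smul, smul_sum]
  simp only [smul_smul, mul_comm (∑ y', w y' * g y')]

theorem sum_smul_proj_apply_single [DecidableEq Y] (c : Y → ℝ) (y : Y) :
    (∑ y', c y' • proj y') (Pi.single y 1) = c y := by
  simp [Pi.single_apply]

variable [Nonempty Y]

theorem sum_exp_pos (θ : Y → ℝ) : 0 < ∑ y, exp (θ y) :=
  sum_pos (fun y _ => exp_pos (θ y)) univ_nonempty

theorem softmax_pos (θ : Y → ℝ) (y : Y) : 0 < softmax θ y :=
  div_pos (exp_pos _) (sum_exp_pos θ)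

theorem sum_softmax (θ : Y → ℝ) : ∑ y, softmax θ y = 1 := by
  simp only [softmax, ← sum_div, div_self (sum_exp_pos θ).ne']

theorem softmax_eq_exp_sub_logSumExp (θ : Y → ℝ) (y : Y) :
    softmax θ y = exp (θ y - logSumExp θ) := by
  rw [softmax, logSumExp, exp_sub, exp_log (sum_exp_pos θ)]

theorem log_softmax (θ : Y → ℝ) (y : Y) : log (softmax θ y) = θ y - logSumExp θ := by
  rw [softmax_eq_exp_sub_logSumExp, log_exp]

theorem sum_softmax_smul_sub_eq_zero {M : Type*} [AddCommGroup M] [Module ℝ M]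
    (θ : Y → ℝ) (e : Y → M) :
    ∑ y, softmax θ y • (e y - ∑ y', softmax θ y' • e y') = 0 := by
  simp only [smul_sub, sum_sub_distrib, ← sum_smul, sum_softmax, one_smul, sub_self]

theorem hasFDerivAt_logSumExp (θ : Y → ℝ) :
    HasFDerivAt logSumExp (∑ y, softmax θ y • proj y) θ := by
  have hsum : HasFDerivAt (fun θ : Y → ℝ => ∑ y, exp (θ y)) (∑ y, exp (θ y) • proj y) θ :=
    HasFDerivAt.fun_sum fun y _ => (hasFDerivAt_apply y θ).exp
  refine (hsum.log (sum_exp_pos θ).ne').congr_fderiv ?_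
  simp only [smul_sum, smul_smul, softmax, div_eq_inv_mul]

theorem hasFDerivAt_softmax (θ : Y → ℝ) (y : Y) :
    HasFDerivAt (softmax · y) (softmax θ y • (proj y - ∑ y', softmax θ y' • proj y')) θ := by
  have hfun : (softmax · y) = fun θ => exp (θ y - logSumExp θ) :=
    funext fun θ => softmax_eq_exp_sub_logSumExp θ y
  rw [hfun, softmax_eq_exp_sub_logSumExp θ y]
  exact ((hasFDerivAt_apply y θ).sub (hasFDerivAt_logSumExp θ)).exp

theorem hasFDerivAt_sum_softmax_mul {g : Y → (Y → ℝ) → ℝ} {g' : Y → (Y → ℝ) →L[ℝ] ℝ}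
    {θ : Y → ℝ} (hg : ∀ y, HasFDerivAt (g y) (g' y) θ) :
    HasFDerivAt (fun θ => ∑ y, softmax θ y * g y θ)
      (∑ y, softmax θ y • g' y
        + ∑ y, (softmax θ y * (g y θ - ∑ y', softmax θ y' * g y' θ)) • proj y) θ := by
  refine (HasFDerivAt.fun_sum fun y _ => (hasFDerivAt_softmax θ y).mul (hg y)).congr_fderiv ?_
  rw [sum_add_distrib, sum_smul_smul_sub_sum_smul]

theorem hasFDerivAt_sum_softmax_mul_sub_log_div {πref : Y → ℝ} (hπref : ∀ y, πref y ≠ 0)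
    (S : Y → ℝ) (β : ℝ) (θ : Y → ℝ) :
    HasFDerivAt (fun θ => ∑ y, softmax θ y * (S y - β * log (softmax θ y / πref y)))
      (∑ y, (softmax θ y * (S y - β * log (softmax θ y / πref y)
          - ∑ y', softmax θ y' * (S y' - β * log (softmax θ y' / πref y')))) • proj y) θ := by
  have hg : ∀ y, HasFDerivAt (fun θ => S y - β * log (softmax θ y / πref y))
      (-(β • (proj y - ∑ y', softmax θ y' • proj y'))) θ := by
    intro y
    simp only [log_div (softmax_pos _ y).ne' (hπref y), log_softmax]
    exact ((((hasFDerivAt_apply y θ).sub (hasFDerivAt_logSumExp θ)).sub_const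
      _).const_mul β).const_sub (S y)
  refine (hasFDerivAt_sum_softmax_mul hg).congr_fderiv ?_
  have hzero : ∑ y, softmax θ y • (proj y - ∑ y', softmax θ y' • proj y') = 0 :=
    sum_softmax_smul_sub_eq_zero θ _
  simp only [smul_neg, sum_neg_distrib, smul_comm (softmax θ _) β, ← smul_sum]
  rw [hzero, smul_zero, neg_zero, zero_add]

end

theorem softmax_policy_gradient_advantage_general
    {Y : Type*} [Fintype Y] [DecidableEq Y] [Nonempty Y]
    (πref : Y → ℝ) (hπref0 : ∀ y, 0 < πref y)
    (S : Y → ℝ) (β : ℝ)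
    (sm : (Y → ℝ) → Y → ℝ)
    (hsm : ∀ θ y, sm θ y = Real.exp (θ y) / ∑ y', Real.exp (θ y'))
    (L : (Y → ℝ) → ℝ)
    (hL : ∀ θ, L θ = ∑ y, sm θ y * (S y - β * Real.log (sm θ y / πref y))) :
    Differentiable ℝ L ∧
    ∀ (θ : Y → ℝ) (y : Y),
      fderiv ℝ L θ (Pi.single y 1)
        = sm θ y * (S y - β * Real.log (sm θ y / πref y) - L θ) := by
  obtain rfl : sm = softmax := funext fun θ => funext (hsm θ)
  obtain rfl := funext hL
  have hD := hasFDerivAt_sum_softmax_mul_sub_log_div (fun y => (hπref0 y).ne') S β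
  exact ⟨fun θ => (hD θ).differentiableAt,
    fun θ y => by rw [(hD θ).fderiv, sum_smul_proj_apply_single]⟩

/-- **Advantage form of the policy gradient for the KL-regularized objective under
tabular softmax parameterization** (single-state version).
With `π_θ(y) = exp(θ(y))/Σ_{y'} exp(θ(y'))` and
`L(θ) = Σ_y π_θ(y)(S(y) − β·log(π_θ(y)/π_ref(y)))`, `L` is differentiable and the
partial derivative of `L` in the coordinate `θ(y)` equals `π_θ(y)·A_θ(y)` where
`A_θ(y) = S(y) − β·log(π_θ(y)/π_ref(y)) − L(θ)`. -/
theorem softmax_policy_gradient_advantage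
    {Y : Type*} [Fintype Y] [DecidableEq Y] [Nonempty Y]
    (πref : Y → ℝ) (hπref0 : ∀ y, 0 < πref y) (hπref1 : ∑ y, πref y = 1)
    (S : Y → ℝ) (β : ℝ) (hβ : 0 < β)
    (sm : (Y → ℝ) → Y → ℝ)
    (hsm : ∀ θ y, sm θ y = Real.exp (θ y) / ∑ y', Real.exp (θ y'))
    (L : (Y → ℝ) → ℝ)
    (hL : ∀ θ, L θ = ∑ y, sm θ y * (S y - β * Real.log (sm θ y / πref y))) :
    Differentiable ℝ L ∧
    ∀ (θ : Y → ℝ) (y : Y),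
      fderiv ℝ L θ (Pi.single y 1)
        = sm θ y * (S y - β * Real.log (sm θ y / πref y) - L θ) :=
  softmax_policy_gradient_advantage_general πref hπref0 S β sm hsm L hL
end
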